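/- arXiv:1801.09324 — 6 statements merged into one kernel-verified Lean document; each statement's English description precedes it below -/
import Mathlib

section
/- Let d ∈ ℕ, N ∈ ℕ₀, c, κ, C ∈ (0,∞), (γ_n)_{n∈ℕ₀} ⊆ (0,∞), ϑ ∈ ℝ^d, let ⟨·,·⟩ be a scalar product on ℝ^d with induced norm ‖·‖, let g : ℝ^d → ℝ^d be Borel measurable, let (Ω, 𝓕, ℙ, (𝔽_n)_{n∈ℕ₀}) be a filtered probability space, let D : ℕ × Ω → ℝ^d be an (𝔽_n)_{n∈ℕ}-adapted process, let Θ : ℕ₀ × Ω → ℝ^d satisfy that Θ₀ is 𝔽₀-measurable and for all n ∈ ℕ that Θ_n = Θ_{n−1} + γ_n(g(Θ_{n−1}) + D_n). Assume for all n ∈ ℕ ∩ (N,∞) and A ∈ 𝔽_{n−1} with 𝔼[‖D_n‖] < ∞ that 𝔼[D_n 𝟙_A] = 0, and assume for all n ∈ ℕ and θ ∈ ℝ^d that 𝔼[‖Θ₀‖²] < ∞, 𝔼[‖D_n‖²] ≤ κ(1 + 𝔼[‖Θ_{n−1} − ϑ‖²]), sup_{l ∈ ℕ ∩ (N,∞)}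 γ_l ≤ min{c/(4κ), c}, C = inf_{l ∈ ℕ ∩ (N,∞)}[(γ_l − γ_{l−1})/(γ_l)² + c γ_{l−1}/(2 γ_l)], and ⟨θ − ϑ, g(θ)⟩ ≤ −c·max{‖θ−ϑ‖², ‖g(θ)‖²}. Then for all n ∈ ℕ₀ it holds that 𝔼[‖Θ_n − ϑ‖²] ≤ γ_n · max({2κ/C} ∪ {𝔼[‖Θ_l − ϑ‖²]/γ_l : l ∈ {0,1,...,N}}) < ∞. -/
/-!
Let `e n = 𝔼‖Θ n - ϑ‖²`. For `n > N` write `Θ n - ϑ = Y + γ n • D n` with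
`Y = Θ (n-1) - ϑ + γ n • g (Θ (n-1))`, which is `𝔽 (n-1)`-measurable; the martingale-difference
property of `D` makes `Y` and `D n` orthogonal in `L²`, and the coercivity of `g` gives
`‖Y‖² ≤ (1 - c γ n) ‖Θ (n-1) - ϑ‖²` as soon as `γ n ≤ c`. Hence
`e n ≤ (1 - c γ n) e (n-1) + κ (γ n)² (1 + e (n-1))`, and since `κ γ n ≤ c / 4` the bound
`e n ≤ γ n M` propagates by induction: the definition of `C` is exactly what makes
`(1 - ¾ c γ n) γ (n-1) M + κ (γ n)² ≤ γ n M` once `M ≥ 2κ / C`. Coercivity also forces `c ≤ 1`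
(on a nontrivial space), which keeps the factor `1 - ¾ c γ n` nonnegative.
-/

open MeasureTheory ProbabilityTheory Filter
open scoped RealInnerProductSpace ENNReal

lemma mul_le_of_mul_sq_le_mul {c a b : ℝ} (ha : 0 ≤ a) (hb : 0 ≤ b) (h : c * a ^ 2 ≤ a * b) :
    c * a ≤ b := by
  rcases ha.eq_or_lt with rfl | ha
  · simpa using hb
  · nlinarith

section Geometry

variable {E : Type*} [NormedAddCommGroup E] [InnerProductSpace ℝ E] {c : ℝ} {x y : E}

lemma norm_add_smul_sq_real (x y : E) (t : ℝ) :
    ‖x + t • y‖ ^ 2 = ‖x‖ ^ 2 + 2 * t * ⟪x, y⟫ + t ^ 2 * ‖y‖ ^ 2 := by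
  rw [norm_add_sq_real, inner_smul_right, norm_smul, mul_pow, Real.norm_eq_abs, sq_abs]
  ring

lemma mul_norm_le_norm_of_inner_le_neg_mul_max (hc : 0 ≤ c)
    (h : ⟪x, y⟫ ≤ -c * max (‖x‖ ^ 2) (‖y‖ ^ 2)) : c * ‖x‖ ≤ ‖y‖ ∧ c * ‖y‖ ≤ ‖x‖ := by
  have hxy : -⟪x, y⟫ ≤ ‖x‖ * ‖y‖ := (neg_le_abs _).trans (abs_real_inner_le_norm x y)
  have hx := mul_le_mul_of_nonneg_left (le_max_left (‖x‖ ^ 2) (‖y‖ ^ 2)) hc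
  have hy := mul_le_mul_of_nonneg_left (le_max_right (‖x‖ ^ 2) (‖y‖ ^ 2)) hc
  exact ⟨mul_le_of_mul_sq_le_mul (norm_nonneg x) (norm_nonneg y) (by linarith),
    mul_le_of_mul_sq_le_mul (norm_nonneg y) (norm_nonneg x) (by linarith)⟩

lemma le_one_of_forall_inner_sub_le_neg_mul_max [Nontrivial E] {ϑ : E} {g : E → E} (hc : 0 < c)
    (h : ∀ θ, ⟪θ - ϑ, g θ⟫ ≤ -c * max (‖θ - ϑ‖ ^ 2) (‖g θ‖ ^ 2)) : c ≤ 1 := by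
  obtain ⟨x, hx⟩ := exists_ne (0 : E)
  have hθ := h (ϑ + x)
  rw [add_sub_cancel_left] at hθ
  obtain ⟨hxy, hyx⟩ := mul_norm_le_norm_of_inner_le_neg_mul_max hc.le hθ
  have hx0 : 0 < ‖x‖ := norm_pos_iff.mpr hx
  by_contra! h1
  nlinarith [mul_le_mul_of_nonneg_left hxy hc.le, mul_pos (mul_pos (sub_pos.mpr h1) hc) hx0]

lemma norm_add_smul_sq_le_of_inner_le_neg_mul_max {γ : ℝ} (hγ : 0 ≤ γ) (hγc : γ ≤ c)
    (h : ⟪x, y⟫ ≤ -c * max (‖x‖ ^ 2) (‖y‖ ^ 2)) : ‖x + γ • y‖ ^ 2 ≤ (1 - c * γ) * ‖x‖ ^ 2 := by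
  have hexp := norm_add_smul_sq_real x y γ
  have hx := le_max_left (‖x‖ ^ 2) (‖y‖ ^ 2)
  have hy := le_max_right (‖x‖ ^ 2) (‖y‖ ^ 2)
  have hγ2 : γ ^ 2 * ‖y‖ ^ 2 ≤ c * γ * max (‖x‖ ^ 2) (‖y‖ ^ 2) := by
    have := mul_le_mul_of_nonneg_left hγc hγ
    calc γ ^ 2 * ‖y‖ ^ 2 ≤ γ ^ 2 * max (‖x‖ ^ 2) (‖y‖ ^ 2) := by gcongr
      _ ≤ c * γ * max (‖x‖ ^ 2) (‖y‖ ^ 2) := by gcongr; nlinarith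
  have hcγ : 0 ≤ c * γ := mul_nonneg (hγ.trans hγc) hγ
  nlinarith [mul_le_mul_of_nonneg_left h (by linarith : 0 ≤ 2 * γ),
    mul_le_mul_of_nonneg_left hx hcγ]

end Geometry

lemma le_mul_of_one_step_le {c κ C M γ γ' e e' : ℝ} (hc : c ≤ 1) (hκ : 0 < κ) (hC : 0 < C)
    (hγ : 0 < γ) (hγ' : 0 < γ') (hγc : γ ≤ c) (hγκ : γ ≤ c / (4 * κ))
    (hCγ : C ≤ (γ - γ') / γ ^ 2 + c * γ' / (2 * γ)) (hM : 2 * κ / C ≤ M)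
    (he : 0 ≤ e) (he_le : e ≤ γ' * M) (he' : e' ≤ (1 - c * γ) * e + γ ^ 2 * (κ * (1 + e))) :
    e' ≤ γ * M := by
  have hMC : 2 * κ ≤ M * C := (div_le_iff₀ hC).mp hM
  have hM0 : 0 < M := by nlinarith
  have hκγ : κ * γ ≤ c / 4 := by rw [le_div_iff₀ (by positivity)] at hγκ; linarith
  have hcγ : c * γ ≤ 1 := by nlinarith
  have h1 : e' ≤ (1 - 3 / 4 * (c * γ)) * e + κ * γ ^ 2 := by
    nlinarith [mul_le_mul_of_nonneg_right hκγ (mul_nonneg hγ.le he)]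
  have h2 : e' ≤ (1 - 3 / 4 * (c * γ)) * (γ' * M) + κ * γ ^ 2 := by
    nlinarith [mul_le_mul_of_nonneg_left he_le (by linarith : 0 ≤ 1 - 3 / 4 * (c * γ))]
  have h3 : M * C * γ ^ 2 ≤ M * (γ - γ') + M * c * γ' * γ / 2 := by
    have h := mul_le_mul_of_nonneg_left hCγ (by positivity : 0 ≤ M * γ ^ 2)
    field_simp at h
    nlinarith
  nlinarith [mul_le_mul_of_nonneg_right hMC (sq_nonneg γ), mul_pos (mul_pos hM0 hγ) hγ']

lemma le_mul_max_iSup_div {N n : ℕ} (hn : n ≤ N) {γ e : ℕ → ℝ} (hγ : 0 < γ n) (a : ℝ) :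
    e n ≤ γ n * max a (⨆ l : Fin (N + 1), e l / γ l) := by
  have hle : e n / γ n ≤ ⨆ l : Fin (N + 1), e l / γ l :=
    le_ciSup (f := fun l : Fin (N + 1) => e l / γ l) (Set.finite_range _).bddAbove
      ⟨n, Nat.lt_succ_of_le hn⟩
  calc e n = γ n * (e n / γ n) := by field_simp
    _ ≤ γ n * max a (⨆ l : Fin (N + 1), e l / γ l) := by gcongr; exact hle.trans (le_max_right _ _)

lemma le_mul_of_recursion {N : ℕ} {c κ C M : ℝ} {γ e : ℕ → ℝ} (hc : c ≤ 1) (hκ : 0 < κ)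
    (hC : 0 < C) (hγ : ∀ n, 0 < γ n) (hγc : ∀ n, N < n → γ n ≤ min (c / (4 * κ)) c)
    (hCγ : ∀ n, N < n → C ≤ (γ n - γ (n - 1)) / γ n ^ 2 + c * γ (n - 1) / (2 * γ n))
    (hM : 2 * κ / C ≤ M) (he : ∀ n, 0 ≤ e n) (hinit : ∀ n ≤ N, e n ≤ γ n * M)
    (hstep : ∀ n, N ≤ n → e (n + 1) ≤ (1 - c * γ (n + 1)) * e n + γ (n + 1) ^ 2 * (κ * (1 + e n))) :
    ∀ n, e n ≤ γ n * M := by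
  intro n
  induction n with
  | zero => exact hinit 0 N.zero_le
  | succ n ih =>
    rcases le_or_gt (n + 1) N with hn | hn
    · exact hinit _ hn
    have hγn := hγc _ hn
    have hCn := hCγ _ hn
    rw [Nat.add_sub_cancel] at hCn
    exact le_mul_of_one_step_le hc hκ hC (hγ _) (hγ n) (hγn.trans (min_le_right _ _))
      (hγn.trans (min_le_left _ _)) hCn hM (he n) ih (hstep n (Nat.lt_succ_iff.mp hn))

lemma Real.sInf_le_of_pos {s : Set ℝ} {x : ℝ} (hs : 0 < sInf s) (hx : x ∈ s) : sInf s ≤ x := by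
  refine csInf_le ?_ hx
  by_contra hbdd
  rw [Real.sInf_of_not_bddBelow hbdd] at hs
  exact hs.false

section SquareIntegrable

variable {Ω E : Type*} [MeasurableSpace Ω] {P : Measure Ω} [NormedAddCommGroup E] {f : Ω → E}

lemma memLp_two_iff_lintegral_nnnorm_sq_lt_top (hf : AEStronglyMeasurable f P) :
    MemLp f 2 P ↔ ∫⁻ ω, (‖f ω‖₊ : ℝ≥0∞) ^ 2 ∂P < ⊤ := by
  rw [memLp_two_iff_integrable_sq_norm hf, Integrable, hasFiniteIntegral_iff_enorm]
  simp only [enorm_eq_nnnorm, nnnorm_pow, nnnorm_norm, ENNReal.coe_pow]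
  exact and_iff_right (hf.norm.pow 2)

lemma lintegral_nnnorm_sq_eq_ofReal_integral (hf : MemLp f 2 P) :
    ∫⁻ ω, (‖f ω‖₊ : ℝ≥0∞) ^ 2 ∂P = ENNReal.ofReal (∫ ω, ‖f ω‖ ^ 2 ∂P) := by
  rw [ofReal_integral_eq_lintegral_ofReal ((memLp_two_iff_integrable_sq_norm hf.1).mp hf)
    (ae_of_all _ fun ω => by positivity)]
  simp_rw [ENNReal.ofReal_pow (norm_nonneg _), ofReal_norm, enorm_eq_nnnorm]

lemma memLp_two_of_lintegral_le_mul_one_add [IsFiniteMeasure P] {κ : ℝ} {f h : Ω → E}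
    (hf : AEStronglyMeasurable f P) (hh : MemLp h 2 P)
    (hfh : ∫⁻ ω, (‖f ω‖₊ : ℝ≥0∞) ^ 2 ∂P ≤
      ENNReal.ofReal κ * (1 + ∫⁻ ω, (‖h ω‖₊ : ℝ≥0∞) ^ 2 ∂P)) :
    MemLp f 2 P := by
  refine (memLp_two_iff_lintegral_nnnorm_sq_lt_top hf).mpr (hfh.trans_lt ?_)
  rw [lintegral_nnnorm_sq_eq_ofReal_integral hh]
  exact ENNReal.mul_lt_top ENNReal.ofReal_lt_top (by simp)

lemma integral_norm_sq_le_mul_one_add {κ : ℝ} (hκ : 0 ≤ κ) {f h : Ω → E}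
    (hf : MemLp f 2 P) (hh : MemLp h 2 P)
    (hfh : ∫⁻ ω, (‖f ω‖₊ : ℝ≥0∞) ^ 2 ∂P ≤
      ENNReal.ofReal κ * (1 + ∫⁻ ω, (‖h ω‖₊ : ℝ≥0∞) ^ 2 ∂P)) :
    ∫ ω, ‖f ω‖ ^ 2 ∂P ≤ κ * (1 + ∫ ω, ‖h ω‖ ^ 2 ∂P) := by
  have hh0 : 0 ≤ ∫ ω, ‖h ω‖ ^ 2 ∂P := integral_nonneg fun ω => by positivity
  rwa [lintegral_nnnorm_sq_eq_ofReal_integral hf, lintegral_nnnorm_sq_eq_ofReal_integral hh,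
    ← ENNReal.ofReal_one, ← ENNReal.ofReal_add zero_le_one hh0, ← ENNReal.ofReal_mul hκ,
    ENNReal.ofReal_le_ofReal_iff (by positivity)] at hfh

end SquareIntegrable

section Orthogonality

variable {Ω E : Type*} {m m0 : MeasurableSpace Ω} {P : Measure Ω}
  [NormedAddCommGroup E] [InnerProductSpace ℝ E]

lemma MeasureTheory.MemLp.integrable_inner {f g : Ω → E} (hf : MemLp f 2 P) (hg : MemLp g 2 P) :
    Integrable (fun ω => ⟪f ω, g ω⟫) P :=
  (L2.integrable_inner (𝕜 := ℝ) (hf.toLp f) (hg.toLp g)).congr <| by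
    filter_upwards [hf.coeFn_toLp, hg.coeFn_toLp] with ω hfω hgω
    rw [hfω, hgω]

lemma integral_inner_eq_zero_of_setIntegral_eq_zero [CompleteSpace E] [IsFiniteMeasure P]
    (hm : m ≤ m0) {f g : Ω → E} (hf : StronglyMeasurable[m] f)
    (hfg : Integrable (fun ω => ⟪f ω, g ω⟫) P) (hg : Integrable g P)
    (hg0 : ∀ A, MeasurableSet[m] A → ∫ ω in A, g ω ∂P = 0) :
    ∫ ω, ⟪f ω, g ω⟫ ∂P = 0 := by
  have hcond : P[g|m] =ᵐ[P] 0 :=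
    (ae_eq_condExp_of_forall_setIntegral_eq hm hg (fun _ _ _ => integrableOn_zero)
      (fun A hA _ => by simp [hg0 A hA]) aestronglyMeasurable_zero).symm
  have hpull : P[fun ω => ⟪f ω, g ω⟫|m] =ᵐ[P] fun ω => ⟪f ω, P[g|m] ω⟫ :=
    condExp_bilin_of_stronglyMeasurable_left (innerSL ℝ) hf hfg hg
  rw [← integral_condExp hm, integral_congr_ae hpull]
  refine integral_eq_zero_of_ae ?_
  filter_upwards [hcond] with ω hω
  simp [hω]

lemma integral_norm_add_smul_sq_of_setIntegral_eq_zero [CompleteSpace E] [IsFiniteMeasure P]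
    (hm : m ≤ m0) {Y D : Ω → E} (hY : MemLp Y 2 P) (hYm : StronglyMeasurable[m] Y)
    (hD : MemLp D 2 P)
    (hD0 : ∀ A, MeasurableSet[m] A → ∫ ω in A, D ω ∂P = 0) (t : ℝ) :
    ∫ ω, ‖Y ω + t • D ω‖ ^ 2 ∂P = ∫ ω, ‖Y ω‖ ^ 2 ∂P + t ^ 2 * ∫ ω, ‖D ω‖ ^ 2 ∂P := by
  have hYD : Integrable (fun ω => ⟪Y ω, D ω⟫) P := hY.integrable_inner hD
  have horth : ∫ ω, ⟪Y ω, D ω⟫ ∂P = 0 :=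
    integral_inner_eq_zero_of_setIntegral_eq_zero hm hYm hYD (hD.integrable one_le_two) hD0
  have hY2 := (memLp_two_iff_integrable_sq_norm hY.1).mp hY
  have hD2 := (memLp_two_iff_integrable_sq_norm hD.1).mp hD
  simp_rw [norm_add_smul_sq_real]
  rw [integral_add (f := fun ω => ‖Y ω‖ ^ 2 + 2 * t * ⟪Y ω, D ω⟫) (hY2.add (hYD.const_mul _))
      (hD2.const_mul _), integral_add hY2 (hYD.const_mul _),
    integral_const_mul, integral_const_mul, horth, mul_zero, add_zero]

end Orthogonality

section Recursion

variable {Ω E : Type*} [NormedAddCommGroup E] [NormedSpace ℝ E]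
  {γ : ℕ → ℝ} {g : E → E} {Θ D : ℕ → Ω → E}

lemma measurable_of_recursion [MeasurableSpace E] [MeasurableAdd₂ E] [MeasurableConstSMul ℝ E]
    {m0 : MeasurableSpace Ω} (ℱ : Filtration ℕ m0) (hg : Measurable g)
    (hΘ0 : Measurable[ℱ 0] (Θ 0)) (hD : ∀ n, Measurable[ℱ (n + 1)] (D (n + 1)))
    (hΘ : ∀ n ω, Θ (n + 1) ω = Θ n ω + γ (n + 1) • (g (Θ n ω) + D (n + 1) ω)) :
    ∀ n, Measurable[ℱ n] (Θ n) := by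
  intro n
  induction n with
  | zero => exact hΘ0
  | succ n ih =>
    have ih' : Measurable[ℱ (n + 1)] (Θ n) := ih.mono (ℱ.mono n.le_succ) le_rfl
    rw [funext (hΘ n)]
    exact ih'.add (((hg.comp ih').add (hD n)).const_smul _)

variable [MeasurableSpace Ω] {P : Measure Ω} {ϑ : E}

lemma memLp_two_sub_of_recursion [IsFiniteMeasure P] [MeasurableSpace E] [BorelSpace E]
    [SecondCountableTopology E] {κ K : ℝ} (hg : Measurable g)
    (hgle : ∀ θ, ‖g θ‖ ≤ K * ‖θ - ϑ‖) (hΘm : ∀ n, Measurable (Θ n))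
    (hDm : ∀ n, Measurable (D (n + 1))) (hΘ0 : MemLp (Θ 0) 2 P)
    (hD : ∀ n, ∫⁻ ω, (‖D (n + 1) ω‖₊ : ℝ≥0∞) ^ 2 ∂P ≤
      ENNReal.ofReal κ * (1 + ∫⁻ ω, (‖Θ n ω - ϑ‖₊ : ℝ≥0∞) ^ 2 ∂P))
    (hΘ : ∀ n ω, Θ (n + 1) ω = Θ n ω + γ (n + 1) • (g (Θ n ω) + D (n + 1) ω)) :
    ∀ n, MemLp (fun ω => Θ n ω - ϑ) 2 P := by
  intro n
  induction n with
  | zero => exact hΘ0.sub (memLp_const ϑ)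
  | succ n ih =>
    have hG : MemLp (fun ω => g (Θ n ω)) 2 P :=
      ih.of_le_mul (hg.comp (hΘm n)).aestronglyMeasurable (ae_of_all _ fun ω => hgle (Θ n ω))
    have hDn : MemLp (D (n + 1)) 2 P :=
      memLp_two_of_lintegral_le_mul_one_add (hDm n).aestronglyMeasurable ih (hD n)
    have hrec : (fun ω => Θ (n + 1) ω - ϑ) =
        fun ω => (Θ n ω - ϑ) + γ (n + 1) • (g (Θ n ω) + D (n + 1) ω) := by
      funext ω
      rw [hΘ n ω]
      abel
    rw [hrec]
    exact ih.add ((hG.add hDn).const_smul _)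

end Recursion

section Step

variable {Ω E : Type*} {m m0 : MeasurableSpace Ω} {P : Measure Ω} [IsFiniteMeasure P]
  [NormedAddCommGroup E] [InnerProductSpace ℝ E] [CompleteSpace E] [MeasurableSpace E]
  [BorelSpace E] [SecondCountableTopology E]

lemma integral_norm_sub_sq_le_of_step (hm : m ≤ m0) {c γ : ℝ} {ϑ : E} {g : E → E}
    {θ₀ θ₁ D : Ω → E} (hγ : 0 ≤ γ) (hγc : γ ≤ c)
    (hmono : ∀ θ, ⟪θ - ϑ, g θ⟫ ≤ -c * max (‖θ - ϑ‖ ^ 2) (‖g θ‖ ^ 2)) (hg : Measurable g)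
    (hθ₀ : Measurable[m] θ₀) (hX : MemLp (fun ω => θ₀ ω - ϑ) 2 P) (hD : MemLp D 2 P)
    (hD0 : ∀ A, MeasurableSet[m] A → ∫ ω in A, D ω ∂P = 0)
    (hθ₁ : ∀ ω, θ₁ ω = θ₀ ω + γ • (g (θ₀ ω) + D ω)) :
    ∫ ω, ‖θ₁ ω - ϑ‖ ^ 2 ∂P ≤ (1 - c * γ) * ∫ ω, ‖θ₀ ω - ϑ‖ ^ 2 ∂P + γ ^ 2 * ∫ ω, ‖D ω‖ ^ 2 ∂P := by
  set Y : Ω → E := fun ω => (θ₀ ω - ϑ) + γ • g (θ₀ ω)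
  have hYle : ∀ ω, ‖Y ω‖ ^ 2 ≤ (1 - c * γ) * ‖θ₀ ω - ϑ‖ ^ 2 := fun ω =>
    norm_add_smul_sq_le_of_inner_le_neg_mul_max hγ hγc (hmono (θ₀ ω))
  have hYm : Measurable[m] Y := (hθ₀.sub_const ϑ).add ((hg.comp hθ₀).const_smul γ)
  have hY : MemLp Y 2 P := by
    refine hX.of_le_mul (c := 1) (hYm.mono hm le_rfl).aestronglyMeasurable (ae_of_all _ fun ω => ?_)
    rw [one_mul, ← pow_le_pow_iff_left₀ (norm_nonneg _) (norm_nonneg _) two_ne_zero]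
    nlinarith [hYle ω, mul_nonneg (hγ.trans hγc) hγ, sq_nonneg ‖θ₀ ω - ϑ‖]
  have hθ₁Y : ∀ ω, θ₁ ω - ϑ = Y ω + γ • D ω := fun ω => by
    rw [hθ₁ ω, smul_add, add_assoc (θ₀ ω - ϑ)]
    abel
  simp_rw [hθ₁Y]
  rw [integral_norm_add_smul_sq_of_setIntegral_eq_zero hm hY hYm.stronglyMeasurable hD hD0,
    ← integral_const_mul (1 - c * γ)]
  gcongr ?_ + _
  exact integral_mono ((memLp_two_iff_integrable_sq_norm hY.1).mp hY)
    (((memLp_two_iff_integrable_sq_norm hX.1).mp hX).const_mul _) hYle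

end Step

theorem stmt_3_general {E : Type*} [NormedAddCommGroup E] [InnerProductSpace ℝ E]
    [FiniteDimensional ℝ E] [MeasurableSpace E] [BorelSpace E]
    (N : ℕ) (c κ C : ℝ) (hc : 0 < c) (hκ : 0 < κ) (hC : 0 < C)
    (γ : ℕ → ℝ) (hγ : ∀ n : ℕ, 0 < γ n)
    (ϑ : E) (g : E → E) (hg : Measurable g)
    {Ω : Type*} [m0 : MeasurableSpace Ω] (P : Measure Ω) [IsProbabilityMeasure P]
    (ℱ : Filtration ℕ m0)
    (D : ℕ → Ω → E) (hD_adapted : ∀ n : ℕ, 1 ≤ n → Measurable[ℱ n] (D n))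
    (Θ : ℕ → Ω → E) (hΘ0_meas : Measurable[ℱ 0] (Θ 0))
    (hΘ : ∀ n : ℕ, 1 ≤ n → ∀ ω : Ω,
      Θ n ω = Θ (n - 1) ω + γ n • (g (Θ (n - 1) ω) + D n ω))
    (hD_mean : ∀ n : ℕ, N < n → Integrable (D n) P →
      ∀ A : Set Ω, MeasurableSet[ℱ (n - 1)] A → ∫ ω in A, D n ω ∂P = 0)
    (hΘ0_int : ∫⁻ ω, (‖Θ 0 ω‖₊ : ℝ≥0∞) ^ 2 ∂P < ⊤)
    (hD_mom : ∀ n : ℕ, 1 ≤ n →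
      ∫⁻ ω, (‖D n ω‖₊ : ℝ≥0∞) ^ 2 ∂P ≤
        ENNReal.ofReal κ * (1 + ∫⁻ ω, (‖Θ (n - 1) ω - ϑ‖₊ : ℝ≥0∞) ^ 2 ∂P))
    (hsup : ∀ l : ℕ, N < l → γ l ≤ min (c / (4 * κ)) c)
    (hCdef : C = sInf {x : ℝ | ∃ l : ℕ, N < l ∧
      x = (γ l - γ (l - 1)) / γ l ^ 2 + c * γ (l - 1) / (2 * γ l)})
    (hmono : ∀ θ : E, ⟪θ - ϑ, g θ⟫ ≤ -c * max (‖θ - ϑ‖ ^ 2) (‖g θ‖ ^ 2)) :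
    ∀ n : ℕ, ∫⁻ ω, (‖Θ n ω - ϑ‖₊ : ℝ≥0∞) ^ 2 ∂P ≤
      ENNReal.ofReal (γ n * max (2 * κ / C)
        (⨆ l : Fin (N + 1), (∫⁻ ω, (‖Θ l ω - ϑ‖₊ : ℝ≥0∞) ^ 2 ∂P).toReal / γ l)) := by
  rcases subsingleton_or_nontrivial E with hE | hE
  · simp [Subsingleton.elim _ (0 : E)]
  have hΘ' (n : ℕ) (ω : Ω) : Θ (n + 1) ω = Θ n ω + γ (n + 1) • (g (Θ n ω) + D (n + 1) ω) := by
    simpa using hΘ (n + 1) n.succ_pos ω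
  have hD_mom' (n : ℕ) := by simpa using hD_mom (n + 1) n.succ_pos
  have hΘm := measurable_of_recursion ℱ hg hΘ0_meas (fun n => hD_adapted (n + 1) n.succ_pos) hΘ'
  have hΘm0 (n : ℕ) : Measurable (Θ n) := (hΘm n).mono (ℱ.le n) le_rfl
  have hDm (n : ℕ) : Measurable (D (n + 1)) := (hD_adapted (n + 1) n.succ_pos).mono (ℱ.le _) le_rfl
  have hgle (θ : E) : ‖g θ‖ ≤ c⁻¹ * ‖θ - ϑ‖ :=
    (le_inv_mul_iff₀ hc).mpr (mul_norm_le_norm_of_inner_le_neg_mul_max hc.le (hmono θ)).2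
  have hX := memLp_two_sub_of_recursion hg hgle hΘm0 hDm
    ((memLp_two_iff_lintegral_nnnorm_sq_lt_top (hΘm0 0).aestronglyMeasurable).mpr hΘ0_int)
    hD_mom' hΘ'
  have hD2 (n : ℕ) : MemLp (D (n + 1)) 2 P :=
    memLp_two_of_lintegral_le_mul_one_add (hDm n).aestronglyMeasurable (hX n) (hD_mom' n)
  have he0 (n : ℕ) : 0 ≤ ∫ ω, ‖Θ n ω - ϑ‖ ^ 2 ∂P := integral_nonneg fun _ => by positivity
  have hstep (n : ℕ) (hn : N ≤ n) : ∫ ω, ‖Θ (n + 1) ω - ϑ‖ ^ 2 ∂P ≤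
      (1 - c * γ (n + 1)) * ∫ ω, ‖Θ n ω - ϑ‖ ^ 2 ∂P
        + γ (n + 1) ^ 2 * (κ * (1 + ∫ ω, ‖Θ n ω - ϑ‖ ^ 2 ∂P)) := by
    have hmean (A : Set Ω) (hA : MeasurableSet[ℱ n] A) : ∫ ω in A, D (n + 1) ω ∂P = 0 :=
      hD_mean (n + 1) (by omega) ((hD2 n).integrable one_le_two) A (by simpa using hA)
    refine (integral_norm_sub_sq_le_of_step (ℱ.le n) (hγ _).le
      ((hsup _ (by omega)).trans (min_le_right _ _)) hmono hg (hΘm n) (hX n) (hD2 n) hmean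
      (hΘ' n)).trans ?_
    gcongr
    exact integral_norm_sq_le_mul_one_add hκ.le (hD2 n) (hX n) (hD_mom' n)
  intro n
  simp_rw [lintegral_nnnorm_sq_eq_ofReal_integral (hX _), ENNReal.toReal_ofReal (he0 _)]
  refine ENNReal.ofReal_le_ofReal (le_mul_of_recursion
    (le_one_of_forall_inner_sub_le_neg_mul_max hc hmono) hκ hC hγ hsup
    (fun l hl => hCdef ▸ Real.sInf_le_of_pos (hCdef ▸ hC) ⟨l, hl, rfl⟩) (le_max_left _ _) he0
    (fun l hl => le_mul_max_iSup_div hl (e := fun n => ∫ ω, ‖Θ n ω - ϑ‖ ^ 2 ∂P) (hγ l) _) hstep n)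

/-- **Mean square error of stochastic approximation** (Proposition 3.4). -/
theorem stmt_3 {E : Type*} [NormedAddCommGroup E] [InnerProductSpace ℝ E]
    [FiniteDimensional ℝ E] [MeasurableSpace E] [BorelSpace E]
    (d : ℕ) (hd : 0 < d) (hdim : Module.finrank ℝ E = d)
    (N : ℕ) (c κ C : ℝ) (hc : 0 < c) (hκ : 0 < κ) (hC : 0 < C)
    (γ : ℕ → ℝ) (hγ : ∀ n : ℕ, 0 < γ n)
    (ϑ : E) (g : E → E) (hg : Measurable g)
    {Ω : Type*} [m0 : MeasurableSpace Ω] (P : Measure Ω) [IsProbabilityMeasure P]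
    (ℱ : Filtration ℕ m0)
    (D : ℕ → Ω → E) (hD_adapted : ∀ n : ℕ, 1 ≤ n → Measurable[ℱ n] (D n))
    (Θ : ℕ → Ω → E) (hΘ0_meas : Measurable[ℱ 0] (Θ 0))
    (hΘ : ∀ n : ℕ, 1 ≤ n → ∀ ω : Ω,
      Θ n ω = Θ (n - 1) ω + γ n • (g (Θ (n - 1) ω) + D n ω))
    (hD_mean : ∀ n : ℕ, N < n → Integrable (D n) P →
      ∀ A : Set Ω, MeasurableSet[ℱ (n - 1)] A → ∫ ω in A, D n ω ∂P = 0)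
    (hΘ0_int : ∫⁻ ω, (‖Θ 0 ω‖₊ : ℝ≥0∞) ^ 2 ∂P < ⊤)
    (hD_mom : ∀ n : ℕ, 1 ≤ n →
      ∫⁻ ω, (‖D n ω‖₊ : ℝ≥0∞) ^ 2 ∂P ≤
        ENNReal.ofReal κ * (1 + ∫⁻ ω, (‖Θ (n - 1) ω - ϑ‖₊ : ℝ≥0∞) ^ 2 ∂P))
    (hsup : ∀ l : ℕ, N < l → γ l ≤ min (c / (4 * κ)) c)
    (hCdef : C = sInf {x : ℝ | ∃ l : ℕ, N < l ∧
      x = (γ l - γ (l - 1)) / γ l ^ 2 + c * γ (l - 1) / (2 * γ l)})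
    (hmono : ∀ θ : E, ⟪θ - ϑ, g θ⟫ ≤ -c * max (‖θ - ϑ‖ ^ 2) (‖g θ‖ ^ 2)) :
    ∀ n : ℕ, ∫⁻ ω, (‖Θ n ω - ϑ‖₊ : ℝ≥0∞) ^ 2 ∂P ≤
      ENNReal.ofReal (γ n * max (2 * κ / C)
        (⨆ l : Fin (N + 1), (∫⁻ ω, (‖Θ l ω - ϑ‖₊ : ℝ≥0∞) ^ 2 ∂P).toReal / γ l)) :=
  stmt_3_general N c κ C hc hκ hC γ hγ ϑ g hg (m0 := m0) P ℱ D hD_adapted Θ hΘ0_meas hΘ hD_mean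
    hΘ0_int hD_mom hsup hCdef hmono
end

section
/- Let N ∈ ℕ₀, k, κ, c, C ∈ (0,∞), let (e_n)_{n∈ℕ₀} ⊆ [0,∞) and (γ_n)_{n∈ℕ₀} ⊆ (0,∞) satisfy for all n ∈ ℕ with n > N that e_n ≤ (1 − cγ_n)e_{n−1} + κ(γ_n)^{k+1}, that sup_{l ∈ ℕ, l > N} γ_l ≤ 1/c, and that C = inf_{l ∈ ℕ, l > N}[((γ_l)^k − (γ_{l−1})^k)/(γ_l)^{k+1} + c(γ_{l−1})^k/(γ_l)^k]. Then for all n ∈ ℕ₀ it holds that e_n ≤ max{e₀/(γ₀)^k, e₁/(γ₁)^k, ..., e_N/(γ_N)^k, κ/C} · (γ_n)^k. -/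
/-!
Let `M` be the maximum in the conclusion. The bound `e n ≤ M * γ n ^ k` holds for `n ≤ N` by
the choice of `M`, and propagates by induction: multiplying the defining inequality of `C` by
`γ n ^ (k + 1)` gives `C γₙ^(k+1) ≤ γₙ^k - γₙ₋₁^k + c γₙ γₙ₋₁^k`, so with `κ ≤ M C` the
recursion yields `e n ≤ (1 - c γₙ) M γₙ₋₁^k + M (γₙ^k - γₙ₋₁^k + c γₙ γₙ₋₁^k) = M γₙ^k`.
-/

namespace Real

theorem bddBelow_of_sInf_ne_zero {s : Set ℝ} (hs : sInf s ≠ 0) : BddBelow s := by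
  by_contra h
  exact hs (sInf_of_not_bddBelow h)

end Real

theorem le_ciSup_fin {α : Type*} [ConditionallyCompleteLattice α] (f : ℕ → α) {N n : ℕ}
    (hn : n ≤ N) : f n ≤ ⨆ l : Fin (N + 1), f l :=
  le_ciSup (f := fun l : Fin (N + 1) => f l) (Set.finite_range _).bddAbove ⟨n, Nat.lt_succ_of_le hn⟩

/-- One step of the induction, with `a = γₙ^k`, `b = γₙ₋₁^k` and `x = γₙ`. -/
theorem le_mul_of_gronwall_step {a b x c C κ M e e' : ℝ} (ha : 0 < a) (hx : 0 < x)
    (hcx : c * x ≤ 1) (hM : 0 ≤ M) (hκ : κ ≤ M * C)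
    (hC : C ≤ (a - b) / (a * x) + c * b / a) (hprev : e' ≤ M * b)
    (hrec : e ≤ (1 - c * x) * e' + κ * (a * x)) : e ≤ M * a := by
  have hCax : C * (a * x) ≤ a - b + c * b * x := by
    calc C * (a * x) ≤ ((a - b) / (a * x) + c * b / a) * (a * x) := by gcongr
      _ = a - b + c * b * x := by field_simp
  calc e ≤ (1 - c * x) * (M * b) + M * C * (a * x) := by
        have := mul_le_mul_of_nonneg_left hprev (sub_nonneg.2 hcx)
        have := mul_le_mul_of_nonneg_right hκ (mul_pos ha hx).le
        linarith
    _ ≤ (1 - c * x) * (M * b) + M * (a - b + c * b * x) := by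
        rw [mul_assoc]; gcongr
    _ = M * a := by ring

theorem stmt_7_general (N : ℕ) (k κ c C : ℝ) (hκ : 0 < κ) (hc : 0 < c) (hC : 0 < C)
    (e γ : ℕ → ℝ) (hγ : ∀ n, 0 < γ n)
    (hrec : ∀ n : ℕ, N < n → e n ≤ (1 - c * γ n) * e (n - 1) + κ * γ n ^ (k + 1))
    (hsup : ∀ l : ℕ, N < l → γ l ≤ 1 / c)
    (hCdef : C = sInf {x : ℝ | ∃ l : ℕ, N < l ∧
      x = (γ l ^ k - γ (l - 1) ^ k) / γ l ^ (k + 1) + c * γ (l - 1) ^ k / γ l ^ k}) :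
    ∀ n : ℕ, e n ≤ max (⨆ l : Fin (N + 1), e l / γ l ^ k) (κ / C) * γ n ^ k := by
  set M := max (⨆ l : Fin (N + 1), e l / γ l ^ k) (κ / C)
  have hM : 0 ≤ M := (div_pos hκ hC).le.trans (le_max_right _ _)
  have hκM : κ ≤ M * C := (div_le_iff₀ hC).1 (le_max_right _ _)
  have hbdd := Real.bddBelow_of_sInf_ne_zero (hCdef ▸ hC.ne')
  have hbase : ∀ n ≤ N, e n ≤ M * γ n ^ k := fun n hn =>
    (div_le_iff₀ (Real.rpow_pos_of_pos (hγ n) k)).1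
      ((le_ciSup_fin (fun l => e l / γ l ^ k) hn).trans (le_max_left _ _))
  intro n
  induction n with
  | zero => exact hbase 0 N.zero_le
  | succ n ih =>
    rcases le_or_gt (n + 1) N with hn | hn
    · exact hbase (n + 1) hn
    have hpow := Real.rpow_add_one (hγ (n + 1)).ne' k
    refine le_mul_of_gronwall_step (Real.rpow_pos_of_pos (hγ (n + 1)) k) (hγ (n + 1))
      ((le_div_iff₀' hc).1 (hsup _ hn)) hM hκM ?_ ih ?_
    · rw [← hpow, hCdef]
      exact csInf_le hbdd ⟨n + 1, hn, rfl⟩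
    · simpa [hpow] using hrec (n + 1) hn

/-- **Gronwall-type inequality** (Lemma 2.15). -/
theorem stmt_7 (N : ℕ) (k κ c C : ℝ) (hk : 0 < k) (hκ : 0 < κ) (hc : 0 < c) (hC : 0 < C)
    (e γ : ℕ → ℝ) (he : ∀ n, 0 ≤ e n) (hγ : ∀ n, 0 < γ n)
    (hrec : ∀ n : ℕ, N < n → e n ≤ (1 - c * γ n) * e (n - 1) + κ * γ n ^ (k + 1))
    (hsup : ∀ l : ℕ, N < l → γ l ≤ 1 / c)
    (hCdef : C = sInf {x : ℝ | ∃ l : ℕ, N < l ∧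
      x = (γ l ^ k - γ (l - 1) ^ k) / γ l ^ (k + 1) + c * γ (l - 1) ^ k / γ l ^ k}) :
    ∀ n : ℕ, e n ≤ max (⨆ l : Fin (N + 1), e l / γ l ^ k) (κ / C) * γ n ^ k :=
  stmt_7_general N k κ c C hκ hc hC e γ hγ hrec hsup hCdef
end

section
/- Let d ∈ ℕ, ϑ ∈ ℝ^d, let ⟨·,·⟩ be a scalar product on ℝ^d with induced norm ‖·‖, and let g : ℝ^d → ℝ^d be a function. Then the following five statements are equivalent: (i) there exists c ∈ (0,∞) such that for all θ ∈ ℝ^d it holds that ⟨θ − ϑ, g(θ)⟩ ≤ −c·max{‖θ−ϑ‖², ‖g(θ)‖²}; (ii) there exist c, ϱ ∈ (0,∞) such that for all θ ∈ ℝ^d it holds that ‖θ + ϱ g(θ) − ϑ‖² ≤ (1 − cϱ)‖θ − ϑ‖²; (iii) there exist c, ϱ ∈ (0,∞) such that for all θ ∈ ℝ^d and r ∈ [0,ϱ] it holds that ‖θ + r g(θ) − ϑ‖² ≤ (1 − cr)‖θ − ϑ‖²; (iv) g(ϑ) = 0 and inf_{r ∈ (0,∞)} sup_{θ ∈ ℝ^d∖{ϑ}}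 [‖θ + r g(θ) − ϑ‖²/‖θ − ϑ‖²] < 1; (v) g(ϑ) = 0 and inf_{r ∈ (0,∞)} sup_{θ ∈ ℝ^d∖{ϑ}} [(2⟨θ − ϑ, g(θ)⟩ + r‖g(θ)‖²)/‖θ − ϑ‖²] < 0. -/
/-!
With `x = θ - ϑ` and `v = g θ`, every condition is a pointwise inequality between `‖x‖²`,
`⟪x, v⟫` and `‖v‖²`, and they are linked by `‖x + r • v‖² = ‖x‖² + r (2 ⟪x, v⟫ + r ‖v‖²)`.
An extended-real infimum over `r > 0` of suprema of ratios is `< b` exactly when, for some `r`,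
the ratios are uniformly bounded by a real `s < b`; this turns (iv) and (v) into pointwise
inequalities as well.
-/

open scoped RealInnerProductSpace

theorem EReal.iSup_coe_lt_coe_iff {ι : Sort*} {f : ι → ℝ} {b : ℝ} :
    ⨆ i, (f i : EReal) < b ↔ ∃ s < b, ∀ i, f i ≤ s := by
  refine ⟨fun h => ?_, fun ⟨s, hs, hf⟩ => ?_⟩
  · obtain ⟨s, hfs, hsb⟩ := EReal.lt_iff_exists_real_btwn.mp h
    exact ⟨s, EReal.coe_lt_coe_iff.mp hsb,
      fun i => EReal.coe_le_coe_iff.mp ((le_iSup _ i).trans hfs.le)⟩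
  · exact (iSup_le fun i => EReal.coe_le_coe_iff.mpr (hf i)).trans_lt
      (EReal.coe_lt_coe_iff.mpr hs)

theorem iInf_iSup_div_norm_sub_sq_lt_iff {E : Type*} [NormedAddCommGroup E] (ϑ : E)
    (F : ℝ → E → ℝ) (b : ℝ) :
    (⨅ r : {r : ℝ // 0 < r}, ⨆ θ : {θ : E // θ ≠ ϑ},
        ((F r θ / ‖(θ : E) - ϑ‖ ^ 2 : ℝ) : EReal)) < b ↔
      ∃ r > 0, ∃ s < b, ∀ θ ≠ ϑ, F r θ ≤ s * ‖θ - ϑ‖ ^ 2 := by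
  simp only [iInf_lt_iff, EReal.iSup_coe_lt_coe_iff, Subtype.exists, Subtype.forall, exists_prop]
  refine exists_congr fun r => and_congr_right fun _ => exists_congr fun s =>
    and_congr_right fun _ => forall₂_congr fun θ hθ => ?_
  rw [div_le_iff₀ (pow_pos (norm_pos_iff.mpr (sub_ne_zero.mpr hθ)) 2)]

section InnerProductSpace

variable {E : Type*} [NormedAddCommGroup E] [InnerProductSpace ℝ E]

theorem norm_add_smul_sq (x v : E) (r : ℝ) :
    ‖x + r • v‖ ^ 2 = ‖x‖ ^ 2 + r * (2 * ⟪x, v⟫ + r * ‖v‖ ^ 2) := by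
  rw [norm_add_sq_real, real_inner_smul_right, norm_smul, mul_pow, Real.norm_eq_abs, sq_abs]
  ring

theorem norm_add_smul_sq_le_of_inner_le {x v : E} {c r : ℝ}
    (h : ⟪x, v⟫ ≤ -c * max (‖x‖ ^ 2) (‖v‖ ^ 2)) (hr : r ∈ Set.Icc 0 c) :
    ‖x + r • v‖ ^ 2 ≤ (1 - c * r) * ‖x‖ ^ 2 := by
  obtain ⟨hr0, hrc⟩ := hr
  set M := max (‖x‖ ^ 2) (‖v‖ ^ 2)
  have hc : 0 ≤ c := hr0.trans hrc
  have hv : r * ‖v‖ ^ 2 ≤ c * M := mul_le_mul hrc (le_max_right _ _) (sq_nonneg _) hc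
  have hx : c * r * ‖x‖ ^ 2 ≤ c * r * M := by gcongr; exact le_max_left _ _
  calc ‖x + r • v‖ ^ 2 = ‖x‖ ^ 2 + r * (2 * ⟪x, v⟫ + r * ‖v‖ ^ 2) := norm_add_smul_sq x v r
    _ ≤ ‖x‖ ^ 2 + r * (-c * M) := by gcongr; linarith
    _ ≤ (1 - c * r) * ‖x‖ ^ 2 := by linarith

theorem two_inner_add_le_of_norm_add_smul_sq_le {x v : E} {r s : ℝ} (hr : 0 < r)
    (h : ‖x + r • v‖ ^ 2 ≤ s * ‖x‖ ^ 2) :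
    2 * ⟪x, v⟫ + r * ‖v‖ ^ 2 ≤ (s - 1) / r * ‖x‖ ^ 2 := by
  rw [norm_add_smul_sq] at h
  rw [div_mul_eq_mul_div, le_div_iff₀ hr]
  linarith

theorem inner_le_neg_mul_max_of_two_inner_add_le {x v : E} {r s : ℝ} (hr : 0 ≤ r) (hs : s ≤ 0)
    (h : 2 * ⟪x, v⟫ + r * ‖v‖ ^ 2 ≤ s * ‖x‖ ^ 2) :
    ⟪x, v⟫ ≤ -(min (-s) r / 2) * max (‖x‖ ^ 2) (‖v‖ ^ 2) := by
  have hm : 0 ≤ min (-s) r := le_min (neg_nonneg.mpr hs) hr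
  have hx : min (-s) r * ‖x‖ ^ 2 ≤ -s * ‖x‖ ^ 2 := by gcongr; exact min_le_left _ _
  have hv : min (-s) r * ‖v‖ ^ 2 ≤ r * ‖v‖ ^ 2 := by gcongr; exact min_le_right _ _
  have hmax : max (‖x‖ ^ 2) (‖v‖ ^ 2) ≤ ‖x‖ ^ 2 + ‖v‖ ^ 2 :=
    max_le_add_of_nonneg (sq_nonneg _) (sq_nonneg _)
  nlinarith [mul_le_mul_of_nonneg_left hmax hm]

end InnerProductSpace

theorem stmt_9_general {E : Type*} [NormedAddCommGroup E] [InnerProductSpace ℝ E]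
    (ϑ : E) (g : E → E) :
    List.TFAE [
      (∃ c : ℝ, 0 < c ∧ ∀ θ : E,
        ⟪θ - ϑ, g θ⟫ ≤ -c * max (‖θ - ϑ‖ ^ 2) (‖g θ‖ ^ 2)),
      (∃ c ϱ : ℝ, 0 < c ∧ 0 < ϱ ∧ ∀ θ : E,
        ‖θ + ϱ • g θ - ϑ‖ ^ 2 ≤ (1 - c * ϱ) * ‖θ - ϑ‖ ^ 2),
      (∃ c ϱ : ℝ, 0 < c ∧ 0 < ϱ ∧ ∀ θ : E, ∀ r ∈ Set.Icc (0 : ℝ) ϱ,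
        ‖θ + r • g θ - ϑ‖ ^ 2 ≤ (1 - c * r) * ‖θ - ϑ‖ ^ 2),
      (g ϑ = 0 ∧
        (⨅ r : {r : ℝ // 0 < r}, ⨆ θ : {θ : E // θ ≠ ϑ},
          ((‖(θ : E) + (r : ℝ) • g (θ : E) - ϑ‖ ^ 2 / ‖(θ : E) - ϑ‖ ^ 2 : ℝ) : EReal)) < 1),
      (g ϑ = 0 ∧
        (⨅ r : {r : ℝ // 0 < r}, ⨆ θ : {θ : E // θ ≠ ϑ},
          (((2 * ⟪(θ : E) - ϑ, g (θ : E)⟫ + (r : ℝ) * ‖g (θ : E)‖ ^ 2) /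
              ‖(θ : E) - ϑ‖ ^ 2 : ℝ) : EReal)) < 0)
    ] := by
  rw [← EReal.coe_one, ← EReal.coe_zero,
    iInf_iSup_div_norm_sub_sq_lt_iff ϑ (fun r θ => ‖θ + r • g θ - ϑ‖ ^ 2),
    iInf_iSup_div_norm_sub_sq_lt_iff ϑ (fun r θ => 2 * ⟪θ - ϑ, g θ⟫ + r * ‖g θ‖ ^ 2)]
  simp only [add_sub_right_comm _ (_ • _)]
  tfae_have 1 → 3
  | ⟨c, hc, h⟩ => ⟨c, c, hc, hc, fun θ r hr => norm_add_smul_sq_le_of_inner_le (h θ) hr⟩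
  tfae_have 3 → 2
  | ⟨c, ϱ, hc, hϱ, h⟩ => ⟨c, ϱ, hc, hϱ, fun θ => h θ ϱ ⟨hϱ.le, le_rfl⟩⟩
  tfae_have 2 → 4 := by
    rintro ⟨c, ϱ, hc, hϱ, h⟩
    refine ⟨?_, ϱ, hϱ, 1 - c * ϱ, by linarith [mul_pos hc hϱ], fun θ _ => h θ⟩
    simpa [hϱ.ne'] using h ϑ
  tfae_have 4 → 5
  | ⟨hg, r, hr, s, hs, h⟩ => ⟨hg, r, hr, (s - 1) / r, div_neg_of_neg_of_pos (by linarith) hr,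
      fun θ hθ => two_inner_add_le_of_norm_add_smul_sq_le hr (h θ hθ)⟩
  tfae_have 5 → 1 := by
    rintro ⟨hg, r, hr, s, hs, h⟩
    refine ⟨min (-s) r / 2, half_pos (lt_min (neg_pos.mpr hs) hr), fun θ => ?_⟩
    rcases eq_or_ne θ ϑ with rfl | hθ
    · simp [hg]
    · exact inner_le_neg_mul_max_of_two_inner_add_le hr.le hs.le (h θ hθ)
  tfae_finish

/-- **Equivalence of stability-type properties** (Proposition 2.13). -/
theorem stmt_9 {E : Type*} [NormedAddCommGroup E] [InnerProductSpace ℝ E]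
    [FiniteDimensional ℝ E] (d : ℕ) (hd : 0 < d) (hdim : Module.finrank ℝ E = d)
    (ϑ : E) (g : E → E) :
    List.TFAE [
      (∃ c : ℝ, 0 < c ∧ ∀ θ : E,
        ⟪θ - ϑ, g θ⟫ ≤ -c * max (‖θ - ϑ‖ ^ 2) (‖g θ‖ ^ 2)),
      (∃ c ϱ : ℝ, 0 < c ∧ 0 < ϱ ∧ ∀ θ : E,
        ‖θ + ϱ • g θ - ϑ‖ ^ 2 ≤ (1 - c * ϱ) * ‖θ - ϑ‖ ^ 2),
      (∃ c ϱ : ℝ, 0 < c ∧ 0 < ϱ ∧ ∀ θ : E, ∀ r ∈ Set.Icc (0 : ℝ) ϱ,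
        ‖θ + r • g θ - ϑ‖ ^ 2 ≤ (1 - c * r) * ‖θ - ϑ‖ ^ 2),
      (g ϑ = 0 ∧
        (⨅ r : {r : ℝ // 0 < r}, ⨆ θ : {θ : E // θ ≠ ϑ},
          ((‖(θ : E) + (r : ℝ) • g (θ : E) - ϑ‖ ^ 2 / ‖(θ : E) - ϑ‖ ^ 2 : ℝ) : EReal)) < 1),
      (g ϑ = 0 ∧
        (⨅ r : {r : ℝ // 0 < r}, ⨆ θ : {θ : E // θ ≠ ϑ},
          (((2 * ⟪(θ : E) - ϑ, g (θ : E)⟫ + (r : ℝ) * ‖g (θ : E)‖ ^ 2) /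
              ‖(θ : E) - ϑ‖ ^ 2 : ℝ) : EReal)) < 0)
    ] :=
  stmt_9_general ϑ g
end

section
/- Let d ∈ ℕ, ϑ ∈ ℝ^d, c, ϱ ∈ (0,∞), let ⟨·,·⟩ be a scalar product on ℝ^d with induced norm ‖·‖, and let g : ℝ^d → ℝ^d satisfy for all θ ∈ ℝ^d that ‖θ + ϱ g(θ) − ϑ‖² ≤ (1 − cϱ)‖θ − ϑ‖². Then for all θ ∈ ℝ^d and all r ∈ [0,ϱ] it holds that ‖θ + r g(θ) − ϑ‖² ≤ (1 − cr)‖θ − ϑ‖². -/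
/-!
The map `s ↦ ‖θ - ϑ + s • g θ‖ ^ 2` is convex and `s ↦ (1 - c * s) * ‖θ - ϑ‖ ^ 2` is affine; the
two agree at `s = 0`, and by hypothesis the first is below the second at `s = ϱ`, hence on all of
`[0, ϱ]`.
-/

open Set

theorem convexOn_univ_norm_sq {E : Type*} [SeminormedAddCommGroup E] [NormedSpace ℝ E] :
    ConvexOn ℝ univ (fun x : E ↦ ‖x‖ ^ 2) :=
  convexOn_univ_norm.pow (fun _ _ ↦ norm_nonneg _) 2

theorem ConvexOn.apply_add_smul_le_of_mem_Icc {E : Type*} [AddCommGroup E] [Module ℝ E]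
    {f : E → ℝ} (hf : ConvexOn ℝ univ f) {v w : E} {c ϱ r : ℝ} (hϱ : 0 < ϱ)
    (hr : r ∈ Icc 0 ϱ) (h : f (v + ϱ • w) ≤ (1 - c * ϱ) * f v) :
    f (v + r • w) ≤ (1 - c * r) * f v := by
  set t := r / ϱ
  have ht₀ : 0 ≤ t := div_nonneg hr.1 hϱ.le
  have ht₁ : t ≤ 1 := div_le_one_of_le₀ hr.2 hϱ.le
  have htϱ : t * ϱ = r := div_mul_cancel₀ r hϱ.ne'
  have hcomb : (1 - t) • v + t • (v + ϱ • w) = v + r • w := by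
    rw [smul_add, smul_smul, htϱ, ← add_assoc, ← add_smul, sub_add_cancel, one_smul]
  calc f (v + r • w) ≤ (1 - t) * f v + t * f (v + ϱ • w) := by
        simpa only [hcomb, smul_eq_mul] using
          hf.2 (mem_univ v) (mem_univ (v + ϱ • w)) (sub_nonneg.2 ht₁) ht₀ (sub_add_cancel 1 t)
    _ ≤ (1 - t) * f v + t * ((1 - c * ϱ) * f v) := by gcongr
    _ = (1 - c * r) * f v := by rw [← htϱ]; ring

theorem stmt_11_general {E : Type*} [NormedAddCommGroup E] [InnerProductSpace ℝ E]
    (ϑ : E) (c ϱ : ℝ) (hϱ : 0 < ϱ) (g : E → E)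
    (h : ∀ θ : E, ‖θ + ϱ • g θ - ϑ‖ ^ 2 ≤ (1 - c * ϱ) * ‖θ - ϑ‖ ^ 2) :
    ∀ θ : E, ∀ r ∈ Set.Icc (0 : ℝ) ϱ,
      ‖θ + r • g θ - ϑ‖ ^ 2 ≤ (1 - c * r) * ‖θ - ϑ‖ ^ 2 := by
  intro θ r hr
  have hθ := h θ
  rw [add_sub_right_comm] at hθ ⊢
  exact convexOn_univ_norm_sq.apply_add_smul_le_of_mem_Icc hϱ hr hθ

/-- **Monotonicity of the one-step Lyapunov contraction property** (Lemma 2.9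
in the numbering of the auxiliary results). -/
theorem stmt_11 {E : Type*} [NormedAddCommGroup E] [InnerProductSpace ℝ E]
    [FiniteDimensional ℝ E] (d : ℕ) (hd : 0 < d) (hdim : Module.finrank ℝ E = d)
    (ϑ : E) (c ϱ : ℝ) (hc : 0 < c) (hϱ : 0 < ϱ) (g : E → E)
    (h : ∀ θ : E, ‖θ + ϱ • g θ - ϑ‖ ^ 2 ≤ (1 - c * ϱ) * ‖θ - ϑ‖ ^ 2) :
    ∀ θ : E, ∀ r ∈ Set.Icc (0 : ℝ) ϱ,
      ‖θ + r • g θ - ϑ‖ ^ 2 ≤ (1 - c * r) * ‖θ - ϑ‖ ^ 2 :=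
  stmt_11_general ϑ c ϱ hϱ g h
end

section
/- Let d ∈ ℕ, p ∈ [1,∞), let ⟨·,·⟩ be a scalar product on ℝ^d with induced norm ‖·‖, let (Ω, 𝓕, ℙ) be a probability space, let 𝕀 be a non-empty set, let X_i : Ω → ℝ^d, i ∈ 𝕀, be random variables, assume for all i ∈ 𝕀 that 𝔼[‖X_i‖] < ∞, assume sup_{i∈𝕀} 𝔼[‖X_i − 𝔼[X_i]‖^p] < ∞, and assume ℙ(sup_{i∈𝕀} ‖X_i‖ < ∞) > 0. Then it holds that sup_{i∈𝕀} 𝔼[‖X_i‖^p] < ∞. -/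
/-!
On a set `A` of positive measure, all `‖X i‖` are bounded by one constant `n`. Markov's
inequality, uniform in `i` thanks to the uniform bound on the centred moments, gives a `c` such
that every event `{c ≤ ‖X i - m i‖}` has measure below `μ A`, hence misses a point of `A`; at that
point `‖m i‖ ≤ n + c`. So the centring constants are bounded, and `‖X i‖ ≤ ‖X i - m i‖ + n + c`
transfers the uniform moment bound from `X i - m i` to `X i`.
-/

open MeasureTheory Set
open scoped ENNReal

section

variable {Ω ι E : Type*} [MeasurableSpace Ω] {μ : Measure Ω}

theorem exists_nat_measure_pos_forall_le {f : ι → Ω → ℝ}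
    (h : 0 < μ {ω | BddAbove (range fun i => f i ω)}) :
    ∃ n : ℕ, 0 < μ {ω | ∀ i, f i ω ≤ n} := by
  by_contra! hnull
  refine h.ne' (measure_mono_null (fun ω ⟨b, hb⟩ => ?_) (measure_iUnion_null_iff.2 fun n =>
    nonpos_iff_eq_zero.1 (hnull n)))
  obtain ⟨n, hn⟩ := exists_nat_ge b
  exact mem_iUnion.2 ⟨n, fun i => (hb ⟨i, rfl⟩).trans hn⟩

theorem exists_nat_forall_measure_le_lt {g : ι → Ω → ℝ≥0∞} (hg : ∀ i, AEMeasurable (g i) μ)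
    (hM : ⨆ i, ∫⁻ ω, g i ω ∂μ < ∞) {δ : ℝ≥0∞} (hδ : δ ≠ 0) :
    ∃ n : ℕ, ∀ i, μ {ω | n ≤ g i ω} < δ := by
  obtain ⟨n, hn0, hn⟩ := ENNReal.exists_nat_pos_mul_gt hδ hM.ne
  refine ⟨n, fun i =>
    (ENNReal.mul_lt_mul_iff_right (by positivity) (ENNReal.natCast_ne_top n)).1 ?_⟩
  calc (n : ℝ≥0∞) * μ {ω | n ≤ g i ω} ≤ ∫⁻ ω, g i ω ∂μ := mul_meas_ge_le_lintegral₀ (hg i) _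
    _ ≤ ⨆ i, ∫⁻ ω, g i ω ∂μ := le_iSup (fun i => ∫⁻ ω, g i ω ∂μ) i
    _ < n * δ := hn

variable [NormedAddCommGroup E]

theorem enorm_le_of_measure_lt {x : Ω → E} {m : E} {A : Set Ω} {C c : ℝ≥0∞}
    (hc : μ {ω | c ≤ ‖x ω - m‖ₑ} < μ A) (hA : ∀ ω ∈ A, ‖x ω‖ₑ ≤ C) : ‖m‖ₑ ≤ C + c := by
  obtain ⟨ω, hωA, hω⟩ : (A \ {ω | c ≤ ‖x ω - m‖ₑ}).Nonempty :=
    sdiff_nonempty.2 fun hsub => (measure_mono hsub).not_gt hc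
  calc ‖m‖ₑ = ‖x ω - (x ω - m)‖ₑ := by rw [sub_sub_cancel]
    _ ≤ ‖x ω‖ₑ + ‖x ω - m‖ₑ := enorm_sub_le
    _ ≤ C + c := add_le_add (hA ω hωA) (not_le.1 hω).le

theorem lintegral_enorm_rpow_le_of_enorm_le {p : ℝ} (hp : 0 ≤ p) (x : Ω → E) {m : E} {K : ℝ≥0∞}
    (hm : ‖m‖ₑ ≤ K) :
    ∫⁻ ω, ‖x ω‖ₑ ^ p ∂μ ≤
      ENNReal.LpAddConst (ENNReal.ofReal p)⁻¹ * (∫⁻ ω, ‖x ω - m‖ₑ ^ p ∂μ + K ^ p * μ univ) := by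
  set C := ENNReal.LpAddConst (ENNReal.ofReal p)⁻¹
  have hpt (ω : Ω) : ‖x ω‖ₑ ^ p ≤ C * (‖x ω - m‖ₑ ^ p + K ^ p) := by
    have : ‖x ω‖ₑ ≤ ‖x ω - m‖ₑ + K := calc
      ‖x ω‖ₑ = ‖x ω - m + m‖ₑ := by rw [sub_add_cancel]
      _ ≤ ‖x ω - m‖ₑ + ‖m‖ₑ := enorm_add_le _ _
      _ ≤ ‖x ω - m‖ₑ + K := by gcongr
    exact (ENNReal.rpow_le_rpow this hp).trans (ENNReal.rpow_add_le_mul_rpow_add_rpow' _ _ hp)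
  calc ∫⁻ ω, ‖x ω‖ₑ ^ p ∂μ ≤ ∫⁻ ω, C * (‖x ω - m‖ₑ ^ p + K ^ p) ∂μ := lintegral_mono hpt
    _ = C * (∫⁻ ω, ‖x ω - m‖ₑ ^ p ∂μ + K ^ p * μ univ) := by
      rw [lintegral_const_mul' _ _ (ENNReal.LpAddConst_lt_top _).ne,
        lintegral_add_right' _ aemeasurable_const, lintegral_const]

theorem iSup_lintegral_enorm_rpow_lt_top [IsFiniteMeasure μ] {p : ℝ} (hp : 0 < p)
    {X : ι → Ω → E} (m : ι → E) (hX : ∀ i, AEStronglyMeasurable (X i) μ)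
    (hmom : ⨆ i, ∫⁻ ω, ‖X i ω - m i‖ₑ ^ p ∂μ < ∞)
    (hbdd : 0 < μ {ω | BddAbove (range fun i => ‖X i ω‖)}) :
    ⨆ i, ∫⁻ ω, ‖X i ω‖ₑ ^ p ∂μ < ∞ := by
  obtain ⟨n, hA⟩ := exists_nat_measure_pos_forall_le hbdd
  obtain ⟨k, hk⟩ := exists_nat_forall_measure_le_lt (g := fun i ω => ‖X i ω - m i‖ₑ ^ p)
    (fun i => ((hX i).sub aestronglyMeasurable_const).enorm.pow_const p) hmom hA.ne'
  set K : ℝ≥0∞ := n + (k : ℝ≥0∞) ^ p⁻¹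
  have hK : K ≠ ∞ := by
    have := ENNReal.rpow_lt_top_of_nonneg (inv_nonneg.2 hp.le) (ENNReal.natCast_ne_top k)
    finiteness
  have hk' (i : ι) : μ {ω | (k : ℝ≥0∞) ^ p⁻¹ ≤ ‖X i ω - m i‖ₑ} < μ {ω | ∀ i, ‖X i ω‖ ≤ n} := by
    simpa only [ENNReal.rpow_inv_le_iff hp] using hk i
  have hm (i : ι) : ‖m i‖ₑ ≤ K := enorm_le_of_measure_lt (hk' i) fun ω hω => by
    rw [← ofReal_norm, ← ENNReal.ofReal_natCast]
    exact ENNReal.ofReal_le_ofReal (hω i)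
  calc ⨆ i, ∫⁻ ω, ‖X i ω‖ₑ ^ p ∂μ
      ≤ ENNReal.LpAddConst (ENNReal.ofReal p)⁻¹ *
          ((⨆ i, ∫⁻ ω, ‖X i ω - m i‖ₑ ^ p ∂μ) + K ^ p * μ univ) :=
        iSup_le fun i => (lintegral_enorm_rpow_le_of_enorm_le hp.le (X i) (hm i)).trans <| by
          gcongr _ * (?_ + _)
          exact le_iSup (fun i => ∫⁻ ω, ‖X i ω - m i‖ₑ ^ p ∂μ) i
    _ < ∞ := by
      have := ENNReal.LpAddConst_lt_top (ENNReal.ofReal p)⁻¹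
      have := ENNReal.rpow_lt_top_of_nonneg hp.le hK
      finiteness

end

theorem stmt_16_general {E : Type*} [NormedAddCommGroup E] [InnerProductSpace ℝ E]
    (p : ℝ) (hp : 1 ≤ p)
    {Ω : Type*} [MeasurableSpace Ω] (P : Measure Ω) [IsProbabilityMeasure P]
    {ι : Type*} (X : ι → Ω → E)
    (hX_int : ∀ i, Integrable (X i) P)
    (hmom : (⨆ i, ∫⁻ ω, (‖X i ω - ∫ ω', X i ω' ∂P‖₊ : ENNReal) ^ p ∂P) < ⊤)
    (hbdd : 0 < P {ω | BddAbove (Set.range fun i => ‖X i ω‖)}) :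
    (⨆ i, ∫⁻ ω, (‖X i ω‖₊ : ENNReal) ^ p ∂P) < ⊤ :=
  iSup_lintegral_enorm_rpow_lt_top (zero_lt_one.trans_le hp) _
    (fun i => (hX_int i).aestronglyMeasurable) hmom hbdd

/-- **Uniform moment bound** (Lemma 4.5). -/
theorem stmt_16 {E : Type*} [NormedAddCommGroup E] [InnerProductSpace ℝ E]
    [FiniteDimensional ℝ E] (d : ℕ) (hd : 0 < d) (hdim : Module.finrank ℝ E = d)
    (p : ℝ) (hp : 1 ≤ p)
    {Ω : Type*} [MeasurableSpace Ω] (P : Measure Ω) [IsProbabilityMeasure P]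
    {ι : Type*} [Nonempty ι] (X : ι → Ω → E)
    (hX_int : ∀ i, Integrable (X i) P)
    (hmom : (⨆ i, ∫⁻ ω, (‖X i ω - ∫ ω', X i ω' ∂P‖₊ : ENNReal) ^ p ∂P) < ⊤)
    (hbdd : 0 < P {ω | BddAbove (Set.range fun i => ‖X i ω‖)}) :
    (⨆ i, ∫⁻ ω, (‖X i ω‖₊ : ENNReal) ^ p ∂P) < ⊤ :=
  stmt_16_general p hp P X hX_int hmom hbdd
end

section
/- Let d ∈ ℕ, p ∈ (1,∞), κ ∈ (0,∞), let ⟨·,·⟩ be a scalar product on ℝ^d with induced norm ‖·‖, let (Ω, 𝓕, ℙ) be a probability space, let (S, 𝓢) be a measurable space, let X : Ω → S be a random variable, let F : ℝ^d × S → ℝ be (𝓑(ℝ^d) ⊗ 𝓢)/𝓑(ℝ)-measurable, assume for all x ∈ S that θ ↦ F(θ,x) is C¹, assume for all θ ∈ ℝ^d that 𝔼[|F(θ,X)| + ‖(∇_θ F)(θ,X)‖] < ∞ and 𝔼[‖(∇_θ F)(θ,X) − 𝔼[(∇_θ F)(θ,X)]‖^p] ≤ κ(1 + ‖θ‖^p),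 and let f : ℝ^d → ℝ be the function satisfying for all θ ∈ ℝ^d that f(θ) = 𝔼[F(θ,X)]. Then (i) f ∈ C¹(ℝ^d, ℝ) and (ii) for all θ ∈ ℝ^d it holds that (∇f)(θ) = 𝔼[(∇_θ F)(θ,X)]. -/
open MeasureTheory Filter Topology
open scoped RealInnerProductSpace ENNReal NNReal

/-! Write `g θ ω = ∇_θ F(θ, X ω)` and `G θ = 𝔼[g θ]`. For `u n → θ` the differences
`g (u n) - g θ` tend to `0` pointwise, and after subtracting their means `G (u n) - G θ` they are
bounded in `Lᵖ`. Convergence in measure together with Markov's inequality shows that these means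
stay bounded, so the differences themselves are bounded in `Lᵖ` with `p > 1`, hence uniformly
integrable, and Vitali's theorem makes `θ ↦ g θ` continuous into `L¹`; in particular `G` is
continuous. Integrating the fundamental theorem of calculus along the segment from `θ` to `θ + v`
and exchanging the integrals gives `f (θ + v) - f θ = ∫₀¹ ⟪G (θ + t • v), v⟫ dt`, and the
continuity of `G` turns this into `∇f = G`. -/

section UniformIntegrability

variable {α β : Type*} [MeasurableSpace α] {μ : Measure α} [NormedAddCommGroup β]

theorem unifIntegrable_one_of_eLpNorm_le {ι : Type*} {q : ℝ≥0∞} (hq : 1 < q) {f : ι → α → β}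
    (hf : ∀ i, AEStronglyMeasurable (f i) μ) {C : ℝ≥0∞} (hC : C ≠ ∞)
    (hbound : ∀ i, eLpNorm (f i) q μ ≤ C) : UnifIntegrable f 1 μ := by
  intro ε hε
  set r : ℝ := 1 - 1 / q.toReal
  have hr : 0 < r := by
    rcases eq_or_ne q ∞ with rfl | hq_top
    · simp [r]
    · have : 1 < q.toReal := by
        simpa using (ENNReal.toReal_lt_toReal ENNReal.one_ne_top hq_top).2 hq
      simpa [r, sub_pos] using inv_lt_one_of_one_lt₀ this
  have hsmall : Tendsto (fun δ : ℝ => C * ENNReal.ofReal δ ^ r) (𝓝 0) (𝓝 0) := by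
    have h := ((ENNReal.continuous_rpow_const (y := r)).comp ENNReal.continuous_ofReal).tendsto 0
    simp only [Function.comp_def, ENNReal.ofReal_zero, ENNReal.zero_rpow_of_pos hr] at h
    simpa using ENNReal.Tendsto.const_mul h (Or.inr hC)
  obtain ⟨δ, hδ, hδpos⟩ := (((hsmall.mono_left nhdsWithin_le_nhds).eventually
    (gt_mem_nhds (ENNReal.ofReal_pos.2 hε))).and (self_mem_nhdsWithin (s := Set.Ioi 0))).exists
  refine ⟨δ, hδpos, fun i s hs hμs => ?_⟩
  rw [eLpNorm_indicator_eq_eLpNorm_restrict hs]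
  calc eLpNorm (f i) 1 (μ.restrict s) ≤ eLpNorm (f i) q (μ.restrict s) * μ s ^ r := by
        simpa [r] using eLpNorm_le_eLpNorm_mul_rpow_measure_univ hq.le (hf i).restrict
    _ ≤ C * ENNReal.ofReal δ ^ r := by
        gcongr
        exact (eLpNorm_mono_measure _ Measure.restrict_le_self).trans (hbound i)
    _ ≤ ENNReal.ofReal ε := hδ.le

theorem exists_eventually_eLpNorm_le_of_lintegral_rpow_le {T : Type*} [TopologicalSpace T]
    {h : T → α → β} {b : T → ℝ} (hb : Continuous b) {p : ℝ} (hp : 0 < p)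
    (hmom : ∀ u, ∫⁻ x, ‖h u x‖ₑ ^ p ∂μ ≤ ENNReal.ofReal (b u)) (θ : T) :
    ∃ C : ℝ≥0, ∀ᶠ u in 𝓝 θ, eLpNorm (h u) (ENNReal.ofReal p) μ ≤ C := by
  refine ⟨(ENNReal.ofReal (b θ + 1) ^ (1 / p)).toNNReal, ?_⟩
  filter_upwards [hb.continuousAt.eventually_lt continuousAt_const (lt_add_one _)] with u hu
  rw [ENNReal.coe_toNNReal (by finiteness), eLpNorm_eq_lintegral_rpow_enorm_toReal
    (by simpa using hp) ENNReal.ofReal_ne_top, ENNReal.toReal_ofReal hp.le]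
  exact ENNReal.rpow_le_rpow ((hmom u).trans (ENNReal.ofReal_le_ofReal hu.le)) (by positivity)

variable [IsProbabilityMeasure μ]

theorem eventually_enorm_le_of_tendsto_ae_of_lintegral_sub_le {k : ℕ → α → β} {c : ℕ → β}
    (hk : ∀ n, AEStronglyMeasurable (k n) μ)
    (hae : ∀ᵐ x ∂μ, Tendsto (fun n => k n x) atTop (𝓝 0)) {C : ℝ≥0∞}
    (hC : ∀ᶠ n in atTop, ∫⁻ x, ‖k n x - c n‖ₑ ∂μ ≤ C) :
    ∀ᶠ n in atTop, ‖c n‖ₑ ≤ 2 * (C + 1) := by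
  have hsmall : ∀ᶠ n in atTop, μ {x | 1 ≤ edist (k n x) 0} ≤ 2⁻¹ :=
    (tendstoInMeasure_of_tendsto_ae hk hae 1 one_pos).eventually_le_const (by simp)
  filter_upwards [hC, hsmall] with n hCn hsmalln
  set s := {x | ‖c n‖ₑ ≤ ‖k n x - c n‖ₑ + 1}
  have hs : 2⁻¹ ≤ μ s := by
    have hsub : {x | 1 ≤ edist (k n x) 0}ᶜ ⊆ s := fun x hx => by
      simp only [Set.mem_compl_iff, Set.mem_ofPred_eq, edist_zero_right, not_le] at hx
      calc ‖c n‖ₑ ≤ ‖k n x‖ₑ + ‖k n x - c n‖ₑ := by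
            simpa using enorm_sub_le (a := k n x) (b := k n x - c n)
        _ ≤ ‖k n x - c n‖ₑ + 1 := by rw [add_comm]; gcongr
    have h1 := (measure_univ_le_add_compl _).trans (add_le_add hsmalln (measure_mono hsub))
    rw [measure_univ] at h1
    calc (2⁻¹ : ℝ≥0∞) = 1 - 2⁻¹ := ENNReal.one_sub_inv_two.symm
      _ ≤ μ s := tsub_le_iff_left.2 h1
  calc ‖c n‖ₑ = 2 * (‖c n‖ₑ * 2⁻¹) := by
        rw [mul_comm, mul_assoc, ENNReal.inv_mul_cancel two_ne_zero ENNReal.ofNat_ne_top, mul_one]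
    _ ≤ 2 * (‖c n‖ₑ * μ s) := by gcongr
    _ ≤ 2 * ∫⁻ x, (‖k n x - c n‖ₑ + 1) ∂μ := by
        gcongr
        exact mul_meas_ge_le_lintegral₀
          (((hk n).sub aestronglyMeasurable_const).enorm.add aemeasurable_const) _
    _ ≤ 2 * (C + 1) := by
        rw [lintegral_add_right _ measurable_const, lintegral_const, measure_univ, mul_one]
        gcongr

theorem tendsto_eLpNorm_one_of_tendsto_ae_of_eLpNorm_sub_le {k : ℕ → α → β} {c : ℕ → β}
    (hk : ∀ n, AEStronglyMeasurable (k n) μ)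
    (hae : ∀ᵐ x ∂μ, Tendsto (fun n => k n x) atTop (𝓝 0)) {q : ℝ≥0∞} (hq : 1 < q) {C : ℝ≥0}
    (hC : ∀ᶠ n in atTop, eLpNorm (fun x => k n x - c n) q μ ≤ C) :
    Tendsto (fun n => eLpNorm (k n) 1 μ) atTop (𝓝 0) := by
  have hkc : ∀ n, AEStronglyMeasurable (fun x => k n x - c n) μ :=
    fun n => (hk n).sub aestronglyMeasurable_const
  have hc := eventually_enorm_le_of_tendsto_ae_of_lintegral_sub_le hk hae (C := C) <|
    hC.mono fun n hn => by
      rw [← eLpNorm_one_eq_lintegral_enorm]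
      exact (eLpNorm_le_eLpNorm_of_exponent_le hq.le (hkc n)).trans hn
  have hbound : ∀ᶠ n in atTop, eLpNorm (k n) q μ ≤ C + 2 * (C + 1) := by
    filter_upwards [hC, hc] with n hkcn hcn
    calc eLpNorm (k n) q μ = eLpNorm ((fun x => k n x - c n) + fun _ => c n) q μ := by
          congr 1; ext x; simp
      _ ≤ eLpNorm (fun x => k n x - c n) q μ + eLpNorm (fun _ => c n) q μ :=
          eLpNorm_add_le (hkc n) aestronglyMeasurable_const hq.le
      _ ≤ C + 2 * (C + 1) := by
          rw [eLpNorm_const _ (zero_lt_one.trans hq).ne' (IsProbabilityMeasure.ne_zero μ),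
            measure_univ, ENNReal.one_rpow, mul_one]
          gcongr
  obtain ⟨N, hN⟩ := eventually_atTop.1 hbound
  rw [← tendsto_add_atTop_iff_nat N]
  have hui : UnifIntegrable (fun n => k (n + N)) 1 μ :=
    unifIntegrable_one_of_eLpNorm_le hq (fun n => hk _) (by finiteness)
      fun n => hN _ (Nat.le_add_left _ _)
  simpa using tendsto_Lp_finite_of_tendsto_ae le_rfl ENNReal.one_ne_top (fun n => hk (n + N))
    MemLp.zero hui (hae.mono fun x hx => hx.comp (tendsto_add_atTop_nat N))

theorem continuous_toL1_of_eLpNorm_sub_integral_le {T : Type*} [TopologicalSpace T]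
    [FirstCountableTopology T] [NormedSpace ℝ β] [CompleteSpace β] {g : T → α → β}
    (hint : ∀ θ, Integrable (g θ) μ) (hcont : ∀ x, Continuous fun θ => g θ x) {q : ℝ≥0∞}
    (hq : 1 < q)
    (hmom : ∀ θ, ∃ C : ℝ≥0, ∀ᶠ u in 𝓝 θ, eLpNorm (fun x => g u x - ∫ y, g u y ∂μ) q μ ≤ C) :
    Continuous fun θ => (hint θ).toL1 (g θ) := by
  refine continuous_iff_continuousAt.2 fun θ => ?_
  rw [ContinuousAt, Lp.tendsto_Lp_iff_tendsto_eLpNorm']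
  have hcongr : ∀ u, eLpNorm (⇑((hint u).toL1 (g u)) - ⇑((hint θ).toL1 (g θ))) 1 μ
      = eLpNorm (fun x => g u x - g θ x) 1 μ :=
    fun u => eLpNorm_congr_ae ((hint u).coeFn_toL1.sub (hint θ).coeFn_toL1)
  simp_rw [hcongr]
  refine tendsto_of_seq_tendsto fun u hu => ?_
  obtain ⟨C, hC⟩ := hmom θ
  refine tendsto_eLpNorm_one_of_tendsto_ae_of_eLpNorm_sub_le
    (c := fun n => ∫ y, g (u n) y ∂μ - ∫ y, g θ y ∂μ) (C := C + C)
    (fun n => (hint _).aestronglyMeasurable.sub (hint θ).aestronglyMeasurable)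
    (ae_of_all _ fun x => by simpa using (((hcont x).tendsto θ).comp hu).sub_const (g θ x)) hq ?_
  filter_upwards [hu.eventually hC] with n hn
  calc eLpNorm (fun x => g (u n) x - g θ x - (∫ y, g (u n) y ∂μ - ∫ y, g θ y ∂μ)) q μ
      = eLpNorm ((fun x => g (u n) x - ∫ y, g (u n) y ∂μ)
          - fun x => g θ x - ∫ y, g θ y ∂μ) q μ := by
        congr 1; ext x; simp only [Pi.sub_apply]; abel
    _ ≤ _ := eLpNorm_sub_le ((hint _).aestronglyMeasurable.sub aestronglyMeasurable_const)
          ((hint θ).aestronglyMeasurable.sub aestronglyMeasurable_const) hq.le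
    _ ≤ (C + C : ℝ≥0) := by push_cast; exact add_le_add hn hC.self_of_nhds

end UniformIntegrability

section Calculus

variable {E F : Type*} [NormedAddCommGroup E] [NormedSpace ℝ E] [NormedAddCommGroup F]
  [NormedSpace ℝ F] [CompleteSpace F]

theorem ContDiff.sub_eq_intervalIntegral_fderiv_apply {f : E → F} (hf : ContDiff ℝ 1 f)
    (x v : E) : f (x + v) - f x = ∫ t in (0 : ℝ)..1, fderiv ℝ f (x + t • v) v := by
  have hline : Continuous fun t : ℝ => x + t • v := by fun_prop
  have hderiv : ∀ t : ℝ, HasDerivAt (fun s : ℝ => f (x + s • v)) (fderiv ℝ f (x + t • v) v) t :=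
    fun t => ((hf.differentiable one_ne_zero) _).hasFDerivAt.comp_hasDerivAt t <| by
      simpa using ((hasDerivAt_id t).smul_const v).const_add x
  rw [intervalIntegral.integral_eq_sub_of_hasDerivAt (fun t _ => hderiv t)
    ((((hf.continuous_fderiv one_ne_zero).comp hline).clm_apply
      continuous_const).intervalIntegrable 0 1)]
  simp

theorem hasFDerivAt_of_sub_eq_intervalIntegral {f : E → F} {L : E → E →L[ℝ] F}
    (hL : Continuous L) {x : E} (hf : ∀ v, f (x + v) - f x = ∫ t in (0 : ℝ)..1, L (x + t • v) v) :
    HasFDerivAt f (L x) x := by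
  rw [hasFDerivAt_iff_isLittleO_nhds_zero, Asymptotics.isLittleO_iff]
  intro ε hε
  obtain ⟨δ, hδ, hball⟩ := Metric.continuousAt_iff.1 hL.continuousAt ε hε
  filter_upwards [Metric.ball_mem_nhds (0 : E) hδ] with v hv
  have hcont : Continuous fun t : ℝ => L (x + t • v) v := by fun_prop
  have hdiff : f (x + v) - f x - L x v = ∫ t in (0 : ℝ)..1, (L (x + t • v) - L x) v := by
    simp only [sub_apply]
    rw [hf, intervalIntegral.integral_sub (hcont.intervalIntegrable 0 1)
      intervalIntegrable_const, intervalIntegral.integral_const]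
    simp
  rw [hdiff]
  calc ‖∫ t in (0 : ℝ)..1, (L (x + t • v) - L x) v‖ ≤ ε * ‖v‖ * |1 - 0| := by
        refine intervalIntegral.norm_integral_le_of_norm_le_const fun t ht => ?_
        rw [Set.uIoc_of_le zero_le_one] at ht
        have hdist : dist (x + t • v) x < δ := by
          rw [dist_eq_norm, add_sub_cancel_left, norm_smul, Real.norm_of_nonneg ht.1.le]
          exact (mul_le_of_le_one_left (norm_nonneg v) ht.2).trans_lt (by simpa using hv)
        have hclose := hball hdist
        rw [dist_eq_norm] at hclose
        exact ((L (x + t • v) - L x).le_opNorm v).trans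
          (mul_le_mul_of_nonneg_right hclose.le (norm_nonneg v))
    _ = ε * ‖v‖ := by simp

theorem measurable_fderiv_apply_of_measurable_uncurry [MeasurableSpace E]
    [BorelSpace E] {S : Type*} [MeasurableSpace S] {Φ : E → S → ℝ}
    (hΦ : Measurable (Function.uncurry Φ)) (hdiff : ∀ x, Differentiable ℝ (Φ · x)) (v : E) :
    Measurable fun z : E × S => fderiv ℝ (Φ · z.2) z.1 v := by
  refine measurable_of_tendsto_metrizable (f := fun (n : ℕ) (z : E × S) =>
    slope (fun t : ℝ => Φ (z.1 + t • v) z.2) 0 ((n : ℝ) + 1)⁻¹) (fun n => ?_)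
    (tendsto_pi_nhds.2 fun z => ?_)
  · simp only [slope_def_field, zero_smul, add_zero, sub_zero]
    exact ((hΦ.comp (((continuous_add_const _).measurable.comp measurable_fst).prodMk
      measurable_snd)).sub hΦ).div_const _
  · have hline : HasDerivAt (fun t : ℝ => Φ (z.1 + t • v) z.2) (fderiv ℝ (Φ · z.2) z.1 v) 0 := by
      refine (hdiff z.2 z.1).hasFDerivAt.comp_hasDerivAt_of_eq 0 ?_ (by simp)
      simpa using ((hasDerivAt_id (0 : ℝ)).smul_const v).const_add z.1
    refine (hasDerivAt_iff_tendsto_slope.1 hline).comp (tendsto_nhdsWithin_iff.2 ⟨?_, ?_⟩)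
    · simpa [one_div] using tendsto_one_div_add_atTop_nhds_zero_nat (𝕜 := ℝ)
    · exact Eventually.of_forall fun n => by simp; positivity

end Calculus

section Fubini

variable {E Ω : Type*} [NormedAddCommGroup E] [InnerProductSpace ℝ E] [CompleteSpace E]
  [MeasurableSpace E] [BorelSpace E] [MeasurableSpace Ω] {P : Measure Ω} [SFinite P]

theorem integral_sub_eq_intervalIntegral_inner_integral_gradient {Φ : E → Ω → ℝ}
    (hΦ : Measurable (Function.uncurry Φ)) (hC1 : ∀ ω, ContDiff ℝ 1 (Φ · ω))
    (hint : ∀ θ, Integrable (Φ θ) P)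
    (hgint : ∀ θ, Integrable (fun ω => gradient (Φ · ω) θ) P)
    (hcont : Continuous fun θ => (hgint θ).toL1 (fun ω => gradient (Φ · ω) θ)) (θ v : E) :
    ∫ ω, Φ (θ + v) ω ∂P - ∫ ω, Φ θ ω ∂P
      = ∫ t in (0 : ℝ)..1, ⟪∫ ω, gradient (Φ · ω) (θ + t • v) ∂P, v⟫ := by
  set ν := volume.restrict (Set.Ioc (0 : ℝ) 1)
  set h : ℝ → Ω → ℝ := fun t ω => ⟪gradient (Φ · ω) (θ + t • v), v⟫
  have hmeas : Measurable (Function.uncurry h) := by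
    have := (measurable_fderiv_apply_of_measurable_uncurry hΦ
      (fun ω => (hC1 ω).differentiable one_ne_zero) v).comp
      ((((continuous_const.add (continuous_id.smul continuous_const)).measurable.comp
        measurable_fst).prodMk measurable_snd) : Measurable fun z : ℝ × Ω => (θ + z.1 • v, z.2))
    simpa [h, Function.uncurry_def, Function.comp_def, inner_gradient_left] using this
  have hint_inner : ∀ t, Integrable (h t) P := fun t => (hgint _).inner_const v
  have hprod : Integrable (Function.uncurry h) (ν.prod P) := by
    refine (integrable_prod_iff hmeas.aestronglyMeasurable).2 ⟨ae_of_all _ hint_inner, ?_⟩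
    refine Integrable.mono' (g := fun t =>
        ‖(hgint (θ + t • v)).toL1 (fun ω => gradient (Φ · ω) (θ + t • v))‖ * ‖v‖) ?_
      hmeas.aestronglyMeasurable.norm.integral_prod_right' (ae_of_all _ fun t => ?_)
    · exact ((continuous_norm.comp (hcont.comp (by fun_prop))).mul
        continuous_const).integrableOn_Ioc
    · have hnorm : ‖(hgint (θ + t • v)).toL1 (fun ω => gradient (Φ · ω) (θ + t • v))‖
          = ∫ ω, ‖gradient (Φ · ω) (θ + t • v)‖ ∂P := by
        rw [L1.norm_eq_integral_norm]
        exact integral_congr_ae ((hgint (θ + t • v)).coeFn_toL1.mono fun ω hω => by simp only [hω])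
      rw [Real.norm_of_nonneg (integral_nonneg fun _ => norm_nonneg _), hnorm,
        ← integral_mul_const]
      exact integral_mono (hint_inner t).norm ((hgint _).norm.mul_const _)
        fun ω => norm_inner_le_norm _ _
  calc ∫ ω, Φ (θ + v) ω ∂P - ∫ ω, Φ θ ω ∂P = ∫ ω, ∫ t, h t ω ∂ν ∂P := by
        rw [← integral_sub (hint _) (hint _)]
        refine integral_congr_ae (ae_of_all _ fun ω => ?_)
        simp only [h, inner_gradient_left]
        rw [(hC1 ω).sub_eq_intervalIntegral_fderiv_apply,
          intervalIntegral.integral_of_le zero_le_one]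
    _ = ∫ t, ∫ ω, h t ω ∂P ∂ν := (integral_integral_swap hprod).symm
    _ = _ := by
        rw [intervalIntegral.integral_of_le zero_le_one]
        refine integral_congr_ae (ae_of_all _ fun t => ?_)
        simp only [h]
        rw [real_inner_comm, ← integral_inner (hgint _)]
        simp_rw [real_inner_comm]

end Fubini

theorem stmt_17_general {E : Type*} [NormedAddCommGroup E] [InnerProductSpace ℝ E]
    [FiniteDimensional ℝ E] [MeasurableSpace E] [BorelSpace E]
    (p κ : ℝ) (hp : 1 < p)
    {Ω : Type*} [MeasurableSpace Ω] (P : Measure Ω) [IsProbabilityMeasure P]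
    {S : Type*} [MeasurableSpace S] (X : Ω → S) (hX : Measurable X)
    (F : E → S → ℝ) (hF_meas : Measurable (Function.uncurry F))
    (hF_C1 : ∀ x : S, ContDiff ℝ 1 (fun θ : E => F θ x))
    (hint : ∀ θ : E, Integrable (fun ω => F θ (X ω)) P ∧
      Integrable (fun ω => gradient (fun ψ : E => F ψ (X ω)) θ) P)
    (hmom : ∀ θ : E,
      ∫⁻ ω, (‖gradient (fun ψ : E => F ψ (X ω)) θ
          - ∫ ω', gradient (fun ψ : E => F ψ (X ω')) θ ∂P‖₊ : ENNReal) ^ p ∂P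
        ≤ ENNReal.ofReal (κ * (1 + ‖θ‖ ^ p)))
    (f : E → ℝ) (hf : ∀ θ : E, f θ = ∫ ω, F θ (X ω) ∂P) :
    ContDiff ℝ 1 f ∧
    ∀ θ : E, gradient f θ = ∫ ω, gradient (fun ψ : E => F ψ (X ω)) θ ∂P := by
  set G : E → E := fun θ => ∫ ω, gradient (fun ψ : E => F ψ (X ω)) θ ∂P
  have hp0 : 0 < p := zero_lt_one.trans hp
  have hmom_loc := exists_eventually_eLpNorm_le_of_lintegral_rpow_le
    (continuous_const.mul (continuous_const.add
      (continuous_norm.rpow_const fun _ => Or.inr hp0.le))) hp0 hmom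
  have hgL := continuous_toL1_of_eLpNorm_sub_integral_le (fun θ => (hint θ).2)
    (fun ω => (InnerProductSpace.toDual ℝ E).symm.continuous.comp
      ((hF_C1 (X ω)).continuous_fderiv one_ne_zero)) (by simpa using hp) hmom_loc
  have hG : Continuous G := (continuous_integral.comp hgL).congr fun θ =>
    integral_congr_ae (hint θ).2.coeFn_toL1
  have hgrad : ∀ θ, HasGradientAt f (G θ) θ := fun θ =>
    hasFDerivAt_of_sub_eq_intervalIntegral ((InnerProductSpace.toDual ℝ E).continuous.comp hG)
      fun v => by
        simpa [hf] using integral_sub_eq_intervalIntegral_inner_integral_gradient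
          (Φ := fun θ ω => F θ (X ω))
          (hF_meas.comp (measurable_fst.prodMk (hX.comp measurable_snd)))
          (fun ω => hF_C1 (X ω)) (fun θ => (hint θ).1) (fun θ => (hint θ).2) hgL θ v
  refine ⟨contDiff_one_iff_fderiv.2 ⟨fun θ => (hgrad θ).differentiableAt, ?_⟩,
    fun θ => (hgrad θ).gradient⟩
  rw [← toDual_comp_gradient, gradient_eq hgrad]
  exact (InnerProductSpace.toDual ℝ E).continuous.comp hG

/-- **Interchanging gradient and expectation** (Lemma 4.6). -/
theorem stmt_17 {E : Type*} [NormedAddCommGroup E] [InnerProductSpace ℝ E]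
    [FiniteDimensional ℝ E] [MeasurableSpace E] [BorelSpace E]
    (d : ℕ) (hd : 0 < d) (hdim : Module.finrank ℝ E = d)
    (p κ : ℝ) (hp : 1 < p) (hκ : 0 < κ)
    {Ω : Type*} [MeasurableSpace Ω] (P : Measure Ω) [IsProbabilityMeasure P]
    {S : Type*} [MeasurableSpace S] (X : Ω → S) (hX : Measurable X)
    (F : E → S → ℝ) (hF_meas : Measurable (Function.uncurry F))
    (hF_C1 : ∀ x : S, ContDiff ℝ 1 (fun θ : E => F θ x))
    (hint : ∀ θ : E, Integrable (fun ω => F θ (X ω)) P ∧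
      Integrable (fun ω => gradient (fun ψ : E => F ψ (X ω)) θ) P)
    (hmom : ∀ θ : E,
      ∫⁻ ω, (‖gradient (fun ψ : E => F ψ (X ω)) θ
          - ∫ ω', gradient (fun ψ : E => F ψ (X ω')) θ ∂P‖₊ : ENNReal) ^ p ∂P
        ≤ ENNReal.ofReal (κ * (1 + ‖θ‖ ^ p)))
    (f : E → ℝ) (hf : ∀ θ : E, f θ = ∫ ω, F θ (X ω) ∂P) :
    ContDiff ℝ 1 f ∧
    ∀ θ : E, gradient f θ = ∫ ω, gradient (fun ψ : E => F ψ (X ω)) θ ∂P :=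
  stmt_17_general p κ hp P X hX F hF_meas hF_C1 hint hmom f hf
end
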